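/- arXiv:1112.0970 — 2 statements merged into one kernel-verified Lean document; each statement's English description precedes it below -/
import Mathlib

section
/- Let α > −1 and let n_0, n_1, …, n_m be nonnegative integers with total N = n_0 + n_1 + ⋯ + n_m. Partition [N] into boxes S_0, S_1, …, S_m of sizes n_0, n_1, …, n_m (consecutive intervals), and let S*(n_0,n) be the set of permutations π of [N] such that for every j with 1 ≤ j ≤ m and every i ∈ S_j one has π(i) ∉ S_j (no restriction on S_0). Then ((−1)^{n_1+⋯+n_m}/Γ(α+1)) ∫_0^∞ x^{n_0+α} e^{-x} ∏_{j=1}^m n_j!·L_{n_j}^{(α)}(x) dx = Σ_{π ∈ S*(n_0,n)} (α+1)^{cyc(π)}, where cyc(π) is the number of cycles of π (fixed points counting as cycles). -/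
/-!
With `y = α + 1`, expanding `n! L_n^{(α)}(x) = Σ_k (-1)^k C(n,k) (α+k+1)⋯(α+n) x^k` and using
`∫_0^∞ x^{c+α} e^{-x} dx = Γ(α+1) · y(y+1)⋯(y+c-1)` turns the left side into an explicit
alternating sum of rising factorials in `y` (`boxCount`).

The permutation side is computed by inclusion–exclusion over the set `U` of points of a box `B`
that stay in `B`. The permutations sending `U` into `B` are counted by contracting the points of
`U` one at a time: writing `π = swap u (π u) * σ` with `σ` fixing `u`, the image `π u` ranges over
`B` and closes a new cycle exactly when `π u = u`, so each contraction contributes a factor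
`y + |B| - 1` and leaves a permutation of the remaining points, constrained only by the other
boxes. Both sides are then the same alternating sum.
-/

open Finset MeasureTheory
open scoped Classical

namespace Paper

/-- Sum of sizes of boxes before box `j`. -/
def psum {m : ℕ} (n : Fin m → ℕ) (j : Fin m) : ℕ :=
  ∑ t : Fin m, if t < j then n t else 0

/-- `i` (0-indexed) lies in box `j`. -/
def inBox {m : ℕ} (n : Fin m → ℕ) (j : Fin m) (i : ℕ) : Prop :=
  psum n j ≤ i ∧ i < psum n j + n j

/-- `i` and `k` lie in a common box. -/
def sameBox {m : ℕ} (n : Fin m → ℕ) (i k : ℕ) : Prop :=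
  ∃ j : Fin m, inBox n j i ∧ inBox n j k

/-- Total number of elements. -/
def total {m : ℕ} (n : Fin m → ℕ) : ℕ := ∑ t, n t

/-- `P` is a set partition of `{0, …, N-1}`. -/
def IsPartitionOf (N : ℕ) (P : Finset (Finset ℕ)) : Prop :=
  (∀ b ∈ P, b ⊆ Finset.range N ∧ b.Nonempty) ∧
  ∀ i ∈ Finset.range N, (P.filter fun b => i ∈ b).card = 1

/-- No block of `P` contains two distinct elements of the same box. -/
def InhomBlocks {m : ℕ} (n : Fin m → ℕ) (P : Finset (Finset ℕ)) : Prop :=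
  ∀ b ∈ P, ∀ i ∈ b, ∀ k ∈ b, i ≠ k → ¬ sameBox n i k

/-- The inhomogeneous perfect matchings of `[N]` w.r.t. the boxes of `n`. -/
noncomputable def matchings {m : ℕ} (n : Fin m → ℕ) : Finset (Finset (Finset ℕ)) :=
  ((Finset.range (total n)).powerset.powerset).filter
    (fun P => IsPartitionOf (total n) P ∧ (∀ b ∈ P, b.card = 2) ∧ InhomBlocks n P)

/-- Number of inhomogeneous perfect matchings. -/
noncomputable def K {m : ℕ} (n : Fin m → ℕ) : ℕ := (matchings n).card


/-- Generalized binomial coefficient `binom(n+α, n-k) = (α+k+1)⋯(α+n)/(n-k)!`. -/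
noncomputable def genBinom (α : ℝ) (n k : ℕ) : ℝ :=
  (∏ t ∈ Finset.Ico k n, (α + t + 1)) / (Nat.factorial (n - k) : ℝ)

/-- The Laguerre polynomial `L_n^{(α)}(x) = Σ_{k=0}^n (-1)^k binom(n+α,n-k) x^k/k!`. -/
noncomputable def laguerre (α : ℝ) (n : ℕ) (x : ℝ) : ℝ :=
  ∑ k ∈ Finset.range (n + 1), (-1 : ℝ) ^ k * genBinom α n k * x ^ k / (Nat.factorial k : ℝ)

/-- Number of cycles of a permutation, fixed points counting as cycles. -/
def cyc {α : Type*} [DecidableEq α] [Fintype α] (σ : Equiv.Perm α) : ℕ :=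
  σ.cycleType.card + (Fintype.card α - σ.support.card)

/-- The permutations of `[N]` in which no element of a box `S_j`, `1 ≤ j ≤ m`,
stays in its box; box `S_0` is unrestricted. -/
noncomputable def freeBoxPerms (n0 : ℕ) {m : ℕ} (n : Fin m → ℕ) :
    Finset (Equiv.Perm (Fin (total (Fin.cons n0 n : Fin (m + 1) → ℕ)))) :=
  Finset.univ.filter fun π => ∀ i : Fin (total (Fin.cons n0 n : Fin (m + 1) → ℕ)),
    ∀ j : Fin (m + 1), j ≠ 0 →
      inBox (Fin.cons n0 n : Fin (m + 1) → ℕ) j (i : ℕ) →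
        ¬ inBox (Fin.cons n0 n : Fin (m + 1) → ℕ) j ((π i : ℕ))

section Cycles

open Equiv Equiv.Perm

variable {α : Type*} [DecidableEq α] [Fintype α]

lemma cyc_one : cyc (1 : Perm α) = Fintype.card α := by
  simp [cyc]

lemma cyc_permCongr {β : Type*} [DecidableEq β] [Fintype β] (e : α ≃ β) (σ : Perm α) :
    cyc (e.permCongr σ) = cyc σ := by
  let f : α ≃ {b : β // True} := e.trans (Equiv.subtypeUnivEquiv fun _ => trivial).symm
  have h : e.permCongr σ = σ.extendDomain f := by
    ext b
    rw [extendDomain_apply_subtype _ f trivial]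
    simp [f, Equiv.permCongr_apply, Equiv.subtypeUnivEquiv]
  rw [h, cyc, cyc, cycleType_extendDomain, card_support_extend_domain, Fintype.card_congr e]

lemma cyc_ofSubtype {p : α → Prop} [DecidablePred p] (σ : Perm (Subtype p)) :
    cyc (ofSubtype σ) = cyc σ + (Fintype.card α - Fintype.card (Subtype p)) := by
  have hle : #σ.support ≤ Fintype.card (Subtype p) := Finset.card_le_univ _
  have hp : Fintype.card (Subtype p) ≤ Fintype.card α := Fintype.card_subtype_le p
  rw [cyc, cyc, cycleType_ofSubtype, support_ofSubtype, Finset.card_map]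
  omega

lemma cyc_mul_add_card_of_disjoint {g h : Perm α} (hgh : g.Disjoint h) :
    cyc (g * h) + Fintype.card α = cyc g + cyc h := by
  have hcard : #g.support + #h.support ≤ Fintype.card α := by
    rw [← Finset.card_union_of_disjoint (disjoint_iff_disjoint_support.1 hgh)]
    exact Finset.card_le_univ _
  rw [cyc, cyc, cyc, hgh.cycleType_mul, hgh.card_support_mul, Multiset.card_add]
  omega

lemma cyc_add_card_support_of_isCycle {c : Perm α} (hc : c.IsCycle) :
    cyc c + #c.support = Fintype.card α + 1 := by
  rw [cyc, hc.cycleType, Multiset.card_singleton]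
  have := Finset.card_le_univ c.support
  omega

lemma cyc_swap_mul_of_isCycle {c : Perm α} (hc : c.IsCycle) {x : α} (hx : c x ≠ x) :
    cyc (swap x (c x) * c) = cyc c + 1 := by
  have hcyc := cyc_add_card_support_of_isCycle hc
  by_cases h2 : c (c x) = x
  · have hswap : c = swap x (c x) := hc.eq_swap_of_apply_apply_eq_self hx h2
    have hcard : #c.support = 2 := by rw [hswap, card_support_swap hx.symm]
    have hone : swap x (c x) * c = 1 := by
      nth_rw 2 [hswap]
      exact swap_mul_self _ _
    rw [hone, cyc_one]
    omega
  · have hcard : #(swap x (c x) * c).support + 1 = #c.support := by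
      rw [support_swap_mul_eq c x h2, Finset.card_sdiff_of_subset
        (Finset.singleton_subset_iff.2 (mem_support.2 hx)), Finset.card_singleton]
      have := hc.two_le_card_support
      omega
    have := cyc_add_card_support_of_isCycle (hc.swap_mul hx h2)
    omega

lemma cyc_swap_mul {f : Perm α} {x : α} (hx : f x ≠ x) :
    cyc (swap x (f x) * f) = cyc f + 1 := by
  set c := f.cycleOf x
  have hc : c.IsCycle := isCycle_cycleOf f hx
  have hmem : c ∈ f.cycleFactorsFinset :=
    cycleOf_mem_cycleFactorsFinset_iff.2 (mem_support.2 hx)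
  have hdisj : (f * c⁻¹).Disjoint c := disjoint_mul_inv_of_mem_cycleFactorsFinset hmem
  have hcx : c x = f x := cycleOf_apply_self f x
  have hcx' : c x ≠ x := hcx ▸ hx
  have hswap_disj : (f * c⁻¹).Disjoint (swap x (c x)) := by
    rw [disjoint_iff_disjoint_support, support_swap hcx'.symm]
    refine Finset.disjoint_of_subset_right ?_ (disjoint_iff_disjoint_support.1 hdisj)
    rw [Finset.insert_subset_iff, Finset.singleton_subset_iff]
    exact ⟨mem_support.2 hcx', apply_mem_support.2 (mem_support.2 hcx')⟩
  have hsplit : swap x (f x) * f = (f * c⁻¹) * (swap x (c x) * c) := by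
    calc swap x (f x) * f = swap x (c x) * ((f * c⁻¹) * c) := by rw [hcx, inv_mul_cancel_right]
      _ = ((f * c⁻¹) * swap x (c x)) * c := by rw [← mul_assoc, hswap_disj.commute.eq]
      _ = _ := mul_assoc ..
  have hdisj' : (f * c⁻¹).Disjoint (swap x (c x) * c) := hswap_disj.mul_right hdisj
  have h1 := cyc_mul_add_card_of_disjoint hdisj
  have h2 := cyc_mul_add_card_of_disjoint hdisj'
  rw [inv_mul_cancel_right] at h1
  rw [hsplit]
  have := cyc_swap_mul_of_isCycle hc hcx'
  omega

end Cycles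

section Decompose

open Equiv Equiv.Perm

variable {α : Type*} [DecidableEq α]

lemma swap_apply_mem_iff {B : Finset α} {u b : α} (hu : u ∈ B) (hb : b ∈ B) (y : α) :
    swap u b y ∈ B ↔ y ∈ B := by
  rcases eq_or_ne y u with rfl | hyu
  · simp [hu, hb]
  rcases eq_or_ne y b with rfl | hyb
  · simp [hu, hb]
  rw [swap_apply_of_ne_of_ne hyu hyb]

lemma swap_apply_of_notMem {B : Finset α} {u b y : α} (hu : u ∈ B) (hb : b ∈ B) (hy : y ∉ B) :
    swap u b y = y :=
  swap_apply_of_ne_of_ne (ne_of_mem_of_not_mem hu hy).symm (ne_of_mem_of_not_mem hb hy).symm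

lemma swap_apply_mul_ne_iff (π : Perm α) (u j : α) : (swap u (π u) * π) j ≠ u ↔ j ≠ u := by
  rw [Perm.mul_apply, Ne, swap_apply_eq_iff, swap_apply_left, π.injective.eq_iff]

def decomposeAt (u : α) : Perm α ≃ α × Perm {j // j ≠ u} where
  toFun π := (π u, (swap u (π u) * π).subtypePerm (swap_apply_mul_ne_iff π u))
  invFun p := swap u p.1 * ofSubtype p.2
  left_inv π := by
    show swap u (π u) * ofSubtype ((swap u (π u) * π).subtypePerm (swap_apply_mul_ne_iff π u))
      = π
    rw [ofSubtype_subtypePerm, swap_mul_self_mul]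
    intro j hj hju
    rw [hju, Perm.mul_apply, swap_apply_right] at hj
    exact hj rfl
  right_inv p := by
    obtain ⟨b, σ⟩ := p
    have hb : (swap u b * ofSubtype σ) u = b := by
      rw [Perm.mul_apply, ofSubtype_apply_of_not_mem σ (not_not.2 rfl), swap_apply_left]
    ext j
    · exact hb
    · simp only [hb, subtypePerm_apply, swap_mul_self_mul, ofSubtype_apply_coe]

lemma decomposeAt_symm_apply (u b : α) (σ : Perm {j // j ≠ u}) :
    (decomposeAt u).symm (b, σ) = swap u b * ofSubtype σ :=
  rfl

def MapsIntoAvoiding (U B : Finset α) (r : α → α → Prop) (π : Perm α) : Prop :=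
  (∀ i ∈ U, π i ∈ B) ∧ ∀ i, ¬ r i (π i)

lemma swap_mul_ofSubtype_mapsIntoAvoiding_iff {U B : Finset α} {u : α} (hu : u ∈ U)
    (hUB : U ⊆ B) {r : α → α → Prop} (hr : ∀ i j, r i j → j ∉ B) (b : α) (σ : Perm {j // j ≠ u}) :
    MapsIntoAvoiding U B r (swap u b * ofSubtype σ) ↔
      b ∈ B ∧ MapsIntoAvoiding (U.subtype (· ≠ u)) (B.subtype (· ≠ u)) (fun i j => r i j) σ := by
  have huB := hUB hu
  have happ_u : (swap u b * ofSubtype σ) u = b := by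
    rw [Perm.mul_apply, ofSubtype_apply_of_not_mem σ (not_not.2 rfl), swap_apply_left]
  have happ (i : {j // j ≠ u}) : (swap u b * ofSubtype σ) i = swap u b (σ i) := by
    rw [Perm.mul_apply, ofSubtype_apply_coe]
  simp only [MapsIntoAvoiding, Finset.mem_subtype]
  constructor
  · rintro ⟨hmaps, havoid⟩
    have hb : b ∈ B := happ_u ▸ hmaps u hu
    refine ⟨hb, fun i hi => ?_, fun i hri => ?_⟩
    · rw [← swap_apply_mem_iff huB hb, ← happ]
      exact hmaps i hi
    · have hout := hr _ _ hri
      refine havoid i ?_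
      rwa [happ, swap_apply_of_notMem huB hb hout]
  · rintro ⟨hb, hmaps, havoid⟩
    refine ⟨fun i hi => ?_, fun i hri => ?_⟩
    · by_cases hiu : i = u
      · rwa [hiu, happ_u]
      · rw [happ ⟨i, hiu⟩, swap_apply_mem_iff huB hb]
        exact hmaps ⟨i, hiu⟩ hi
    · have hout := hr _ _ hri
      by_cases hiu : i = u
      · rw [hiu, happ_u] at hout
        exact hout hb
      · rw [happ ⟨i, hiu⟩] at hri hout
        rw [swap_apply_mem_iff huB hb] at hout
        rw [swap_apply_of_notMem huB hb hout] at hri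
        exact havoid ⟨i, hiu⟩ hri

lemma card_subtype_ne {s : Finset α} {u : α} (hu : u ∈ s) : #(s.subtype (· ≠ u)) = #s - 1 := by
  rw [Finset.card_subtype, Finset.filter_ne', Finset.card_erase_of_mem hu]

lemma sum_ite_eq_add_card_sub_one {R : Type*} [CommRing R] (x : R) {B : Finset α} {u : α}
    (hu : u ∈ B) :
    ∑ b ∈ B, (if b = u then x else 1) = x + ((#B - 1 : ℕ) : R) := by
  rw [← Finset.add_sum_erase B _ hu, if_pos rfl,
    Finset.sum_congr rfl fun b hb => if_neg (Finset.ne_of_mem_erase hb),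
    Finset.sum_const, Finset.card_erase_of_mem hu, nsmul_one]

variable [Fintype α]

lemma cyc_swap_mul_ofSubtype (u b : α) (σ : Perm {j // j ≠ u}) :
    cyc (swap u b * ofSubtype σ) = cyc σ + if b = u then 1 else 0 := by
  have hext : cyc (ofSubtype σ) = cyc σ + 1 := by
    have hcard : Fintype.card {j // j ≠ u} + 1 = Fintype.card α := by
      have : 0 < Fintype.card α := Fintype.card_pos_iff.2 ⟨u⟩
      simp only [ne_eq, Fintype.card_subtype_compl, Fintype.card_unique]
      omega
    rw [cyc_ofSubtype]
    omega
  have hu : ofSubtype σ u = u := ofSubtype_apply_of_not_mem σ (not_not.2 rfl)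
  split_ifs with hbu
  · rw [hbu, swap_self, ← Perm.one_def, one_mul, hext]
  · have hmoved : (swap u b * ofSubtype σ) u ≠ u := by
      rwa [Perm.mul_apply, hu, swap_apply_left]
    have := cyc_swap_mul hmoved
    rw [Perm.mul_apply, hu, swap_apply_left, swap_mul_self_mul] at this
    omega

end Decompose

section Contraction

open Equiv Equiv.Perm

variable {R α β : Type*} [CommRing R] [DecidableEq α] [Fintype α] [DecidableEq β] [Fintype β]

noncomputable def cycSum (x : R) (P : Perm α → Prop) : R :=
  ∑ π ∈ Finset.univ.filter P, x ^ cyc π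

lemma cycSum_permCongr (x : R) (e : α ≃ β) (P : Perm β → Prop) :
    cycSum x (fun σ => P (e.permCongr σ)) = cycSum x P :=
  Finset.sum_equiv e.permCongr (by simp) fun σ _ => by rw [cyc_permCongr]

lemma cycSum_avoiding_equiv (x : R) (e : β ≃ α) (r : α → α → Prop) :
    cycSum x (fun σ : Perm β => ∀ i, ¬ r (e i) (e (σ i))) =
      cycSum x (fun π : Perm α => ∀ i, ¬ r i (π i)) := by
  rw [← cycSum_permCongr x e]
  congr! with σ
  simp only [permCongr_apply]
  exact ⟨fun h i => by simpa using h (e.symm i), fun h i => by simpa using h (e i)⟩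

lemma cycSum_mapsIntoAvoiding_eq_mul (x : R) {U B : Finset α} {u : α} (hu : u ∈ U)
    (hUB : U ⊆ B) {r : α → α → Prop} (hr : ∀ i j, r i j → j ∉ B) :
    cycSum x (MapsIntoAvoiding U B r) = (x + ((#B - 1 : ℕ) : R)) *
      cycSum x (MapsIntoAvoiding (U.subtype (· ≠ u)) (B.subtype (· ≠ u)) (fun i j => r i j)) := by
  set P' := MapsIntoAvoiding (U.subtype (· ≠ u)) (B.subtype (· ≠ u)) (fun i j => r i j)
  have hterm (b : α) (σ : Perm {j // j ≠ u}) :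
      (if MapsIntoAvoiding U B r ((decomposeAt u).symm (b, σ))
        then x ^ cyc ((decomposeAt u).symm (b, σ)) else 0) =
      if b ∈ B then (if b = u then x else 1) * (if P' σ then x ^ cyc σ else 0) else 0 := by
    rw [decomposeAt_symm_apply, swap_mul_ofSubtype_mapsIntoAvoiding_iff hu hUB hr,
      cyc_swap_mul_ofSubtype]
    by_cases hb : b ∈ B <;> by_cases hσ : P' σ <;> by_cases hbu : b = u <;>
      simp [hb, hσ, hbu, P', pow_succ, mul_comm]
  calc cycSum x (MapsIntoAvoiding U B r)
      = ∑ b, if b ∈ B then (if b = u then x else 1) * cycSum x P' else 0 := by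
        rw [cycSum, Finset.sum_filter, ← (decomposeAt u).symm.sum_comp, Fintype.sum_prod_type]
        refine Fintype.sum_congr _ _ fun b => ?_
        by_cases hb : b ∈ B
        · simp only [hterm, hb, if_true, ← Finset.mul_sum, cycSum, Finset.sum_filter]
        · simp [hterm, hb]
    _ = (x + ((#B - 1 : ℕ) : R)) * cycSum x P' := by
        rw [Finset.sum_ite_mem, Finset.univ_inter, ← Finset.sum_mul,
          sum_ite_eq_add_card_sub_one x (hUB hu)]

theorem cycSum_mapsIntoAvoiding (x : R) {U B : Finset α} (hUB : U ⊆ B) {r : α → α → Prop}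
    (hr : ∀ i j, r i j → j ∉ B) :
    cycSum x (MapsIntoAvoiding U B r) = (∏ t ∈ Finset.Ico (#B - #U) #B, (x + t)) *
      cycSum x (fun σ : Perm {j // j ∉ U} => ∀ i : {j // j ∉ U}, ¬ r i (σ i)) := by
  obtain ⟨k, hk⟩ : ∃ k, #U = k := ⟨_, rfl⟩
  induction k generalizing α with
  | zero =>
    obtain rfl := Finset.card_eq_zero.1 hk
    rw [Finset.card_empty, Nat.sub_zero, Finset.Ico_self, Finset.prod_empty, one_mul]
    refine Eq.trans ?_
      (cycSum_avoiding_equiv x (Equiv.subtypeUnivEquiv fun j => Finset.notMem_empty j) r).symm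
    congr 1
    ext π
    simp [MapsIntoAvoiding]
  | succ k ih =>
    obtain ⟨u, hu⟩ := Finset.card_pos.1 (by omega : 0 < #U)
    have hB : #U ≤ #B := Finset.card_le_card hUB
    obtain ⟨n, hn⟩ : ∃ n, #B = n + 1 := ⟨#B - 1, by omega⟩
    have hU' : #(U.subtype (· ≠ u)) = k := by rw [card_subtype_ne hu, hk, Nat.add_sub_cancel]
    have hB' : #(B.subtype (· ≠ u)) = n := by rw [card_subtype_ne (hUB hu), hn, Nat.add_sub_cancel]
    rw [cycSum_mapsIntoAvoiding_eq_mul x hu hUB hr,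
      ih (fun i hi => by simpa using hUB (by simpa using hi))
        (fun i j hij => by simpa using hr _ _ hij) hU', hU', hB', hn, hk]
    let e : {j' : {j // j ≠ u} // j' ∉ U.subtype (· ≠ u)} ≃ {j // j ∉ U} :=
      { toFun := fun j => ⟨j.1.1, by simpa using j.2⟩
        invFun := fun j => ⟨⟨j.1, fun h => j.2 (h ▸ hu)⟩, by simpa using j.2⟩
        left_inv := fun _ => rfl
        right_inv := fun _ => rfl }
    have htransport : cycSum x (fun σ : Perm {j' // j' ∉ U.subtype (· ≠ u)} =>
          ∀ i : {j' // j' ∉ U.subtype (· ≠ u)}, ¬ r i (σ i)) =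
        cycSum x (fun σ : Perm {j // j ∉ U} => ∀ i : {j // j ∉ U}, ¬ r i (σ i)) :=
      cycSum_avoiding_equiv x e (fun i j => r i j)
    rw [htransport, Nat.add_sub_add_right n 1 k, Nat.add_sub_cancel,
      Finset.prod_Ico_succ_top (Nat.sub_le n k)]
    ring

lemma sum_pow_cyc (x : R) :
    ∑ π : Perm α, x ^ cyc π = ∏ t ∈ Finset.range (Fintype.card α), (x + t) := by
  have h := cycSum_mapsIntoAvoiding x (Finset.Subset.refl (Finset.univ : Finset α))
    (r := fun _ _ => False) (fun _ _ h => h.elim)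
  have hP : MapsIntoAvoiding Finset.univ Finset.univ (fun _ _ => False) =
      fun _ : Perm α => True := by
    funext π
    simp [MapsIntoAvoiding]
  have hempty : IsEmpty {j : α // j ∉ Finset.univ} := ⟨fun j => j.2 (Finset.mem_univ _)⟩
  simpa [hP, cycSum, ← Finset.range_eq_Ico, Finset.univ_unique, cyc_one] using h

end Contraction

section Boxes

open Equiv Equiv.Perm

variable {R α : Type*} [CommRing R]

def InCommonBox (boxes : List (Finset α)) (i j : α) : Prop :=
  ∃ B ∈ boxes, i ∈ B ∧ j ∈ B

lemma inCommonBox_map_subtype {p : α → Prop} [DecidablePred p] (boxes : List (Finset α))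
    (i j : Subtype p) :
    InCommonBox (boxes.map (Finset.subtype p)) i j ↔ InCommonBox boxes i j := by
  simp [InCommonBox]

lemma disjoint_subtype {p : α → Prop} [DecidablePred p] {s t : Finset α} (h : Disjoint s t) :
    Disjoint (s.subtype p) (t.subtype p) :=
  Finset.disjoint_left.2 fun _ hs ht =>
    Finset.disjoint_left.1 h (Finset.mem_subtype.1 hs) (Finset.mem_subtype.1 ht)

/-- The inclusion–exclusion closed form of the `x ^ cyc`-weighted number of permutations of `N`
points moving every point of each box (pairwise disjoint, of sizes `L`) out of its box. -/
noncomputable def boxCount (x : R) : ℕ → List ℕ → R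
  | N, [] => ∏ t ∈ Finset.range N, (x + t)
  | N, q :: L => ∑ a ∈ Finset.range (q + 1),
      (-1) ^ a * q.choose a * (∏ t ∈ Finset.Ico (q - a) q, (x + t)) * boxCount x (N - a) L

lemma sum_powerset_eq_boxCount (x : R) (B : Finset α) (N : ℕ) (L : List ℕ) :
    ∑ U ∈ B.powerset, (-1) ^ #U *
      ((∏ t ∈ Finset.Ico (#B - #U) #B, (x + t)) * boxCount x (N - #U) L) =
      boxCount x N (#B :: L) := by
  rw [Finset.sum_powerset_apply_card
    (fun a => (-1) ^ a * ((∏ t ∈ Finset.Ico (#B - a) #B, (x + t)) * boxCount x (N - a) L)),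
    boxCount]
  exact Finset.sum_congr rfl fun a _ => by rw [nsmul_eq_mul]; ring

lemma boxCount_cons_add (x : R) (M q : ℕ) (L : List ℕ) :
    boxCount x (M + q) (q :: L) = ∑ k ∈ Finset.range (q + 1),
      (-1) ^ (q - k) * q.choose k * (∏ t ∈ Finset.Ico k q, (x + t)) * boxCount x (M + k) L := by
  rw [boxCount, ← Finset.sum_range_reflect]
  refine Finset.sum_congr rfl fun k hk => ?_
  have hkq : k ≤ q := Nat.lt_succ_iff.1 (Finset.mem_range.1 hk)
  rw [Nat.add_sub_cancel, Nat.sub_sub_self hkq, Nat.choose_symm hkq,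
    show M + q - (q - k) = M + k by omega]

variable [DecidableEq α] [Fintype α]

lemma card_subtype_notMem (U : Finset α) : Fintype.card {j // j ∉ U} = Fintype.card α - #U := by
  simp [Fintype.card_subtype_compl]

lemma cycSum_inclusion_exclusion (x : R) (B : Finset α) (r : α → α → Prop) :
    cycSum x (fun π => (∀ i ∈ B, π i ∉ B) ∧ ∀ i, ¬ r i (π i)) =
      ∑ U ∈ B.powerset, (-1) ^ #U * cycSum x (MapsIntoAvoiding U B r) := by
  let S : α → Finset (Perm α) := fun i => Finset.univ.filter fun π => π i ∈ B
  have h := Finset.inclusion_exclusion_sum_inf_compl B S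
    (fun π => if ∀ i, ¬ r i (π i) then x ^ cyc π else 0)
  have hinter (U : Finset α) : Finset.univ.filter (MapsIntoAvoiding U B r) =
      (U.inf S).filter fun π => ∀ i, ¬ r i (π i) := by
    ext π
    simp [S, Finset.mem_inf, MapsIntoAvoiding]
  simp only [← Finset.sum_filter, zsmul_eq_mul, Int.cast_pow, Int.cast_neg, Int.cast_one] at h
  simp only [cycSum, hinter, ← h]
  refine Finset.sum_congr ?_ fun _ _ => rfl
  ext π
  simp [S, Finset.mem_inf]

theorem cycSum_avoiding_boxes (x : R) (L : List ℕ) (boxes : List (Finset α))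
    (hdisj : boxes.Pairwise _root_.Disjoint) (hL : boxes.map Finset.card = L) :
    cycSum x (fun π => ∀ i, ¬ InCommonBox boxes i (π i)) = boxCount x (Fintype.card α) L := by
  induction L generalizing α with
  | nil =>
    obtain rfl := List.map_eq_nil_iff.1 hL
    simp [cycSum, InCommonBox, boxCount, sum_pow_cyc]
  | cons q L ih =>
    obtain ⟨B, bs, rfl, rfl, hbs⟩ := List.map_eq_cons_iff.1 hL
    obtain ⟨hB, hbs_disj⟩ := List.pairwise_cons.1 hdisj
    have hr (i j : α) : InCommonBox bs i j → j ∉ B := fun ⟨b, hb, _, hj⟩ =>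
      Finset.disjoint_right.1 (hB b hb) hj
    have hsplit : (fun π : Perm α => ∀ i, ¬ InCommonBox (B :: bs) i (π i)) =
        fun π => (∀ i ∈ B, π i ∉ B) ∧ ∀ i, ¬ InCommonBox bs i (π i) := by
      funext π
      simp only [InCommonBox, List.mem_cons, exists_eq_or_imp, not_or, forall_and, not_and]
    rw [hsplit, cycSum_inclusion_exclusion, ← sum_powerset_eq_boxCount]
    refine Finset.sum_congr rfl fun U hU => ?_
    have hUB := Finset.mem_powerset.1 hU
    rw [cycSum_mapsIntoAvoiding x hUB hr, ← card_subtype_notMem]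
    have hsizes : (bs.map (Finset.subtype (· ∉ U))).map Finset.card = L := by
      rw [← hbs, List.map_map]
      refine List.map_congr_left fun b hb => ?_
      rw [Function.comp_apply, Finset.card_subtype]
      exact congrArg Finset.card (Finset.filter_true_of_mem fun j hj hjU =>
        Finset.disjoint_left.1 (hB b hb) (hUB hjU) hj)
    have := ih (bs.map (Finset.subtype (· ∉ U)))
      (List.pairwise_map.2 (hbs_disj.imp disjoint_subtype)) hsizes
    simp only [inCommonBox_map_subtype] at this
    rw [this]

end Boxes

section Laguerre

lemma neg_one_pow_eq_mul_neg_one_pow_sub {M : Type*} [Monoid M] [HasDistribNeg M] {k q : ℕ}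
    (hkq : k ≤ q) : (-1 : M) ^ k = (-1) ^ q * (-1) ^ (q - k) := by
  obtain ⟨d, rfl⟩ := Nat.exists_eq_add_of_le hkq
  rw [Nat.add_sub_cancel_left, pow_add, mul_assoc, ← pow_add, ← two_mul, pow_mul, neg_one_sq,
    one_pow, mul_one]

lemma Gamma_add_nat {s : ℝ} (hs : 0 < s) (c : ℕ) :
    Real.Gamma (s + c) = Real.Gamma s * ∏ t ∈ Finset.range c, (s + t) := by
  induction c with
  | zero => simp
  | succ c ih =>
    rw [Nat.cast_succ, ← add_assoc, Real.Gamma_add_one (by positivity), ih,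
      Finset.prod_range_succ]
    ring

lemma factorial_mul_laguerre (α : ℝ) (n : ℕ) (x : ℝ) :
    (n.factorial : ℝ) * laguerre α n x = ∑ k ∈ Finset.range (n + 1),
      (-1) ^ k * n.choose k * (∏ t ∈ Finset.Ico k n, (α + 1 + t)) * x ^ k := by
  rw [laguerre, Finset.mul_sum]
  refine Finset.sum_congr rfl fun k hk => ?_
  have hkn : k ≤ n := Nat.lt_succ_iff.1 (Finset.mem_range.1 hk)
  rw [genBinom, Nat.cast_choose ℝ hkn, show ∏ t ∈ Finset.Ico k n, (α + 1 + t) =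
    ∏ t ∈ Finset.Ico k n, (α + t + 1) from Finset.prod_congr rfl fun t _ => by ring]
  field_simp

noncomputable def laguerreIntegrand (α : ℝ) (c : ℕ) {m : ℕ} (n : Fin m → ℕ) (x : ℝ) : ℝ :=
  x ^ ((c : ℝ) + α) * Real.exp (-x) * ∏ j : Fin m, (Nat.factorial (n j) : ℝ) * laguerre α (n j) x

lemma laguerreIntegrand_succ (α : ℝ) (c : ℕ) {m : ℕ} (n : Fin (m + 1) → ℕ) {x : ℝ} (hx : 0 < x) :
    laguerreIntegrand α c n x = ∑ k ∈ Finset.range (n 0 + 1),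
      (-1) ^ k * (n 0).choose k * (∏ t ∈ Finset.Ico k (n 0), (α + 1 + t)) *
        laguerreIntegrand α (c + k) (Fin.tail n) x := by
  rw [laguerreIntegrand, Fin.prod_univ_succ, factorial_mul_laguerre, Finset.sum_mul,
    Finset.mul_sum]
  refine Finset.sum_congr rfl fun k _ => ?_
  have hpow : x ^ (((c + k : ℕ) : ℝ) + α) = x ^ ((c : ℝ) + α) * x ^ k := by
    rw [Nat.cast_add, add_right_comm, Real.rpow_add hx, Real.rpow_natCast]
  rw [laguerreIntegrand, hpow]
  simp only [Fin.tail]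
  ring

theorem integral_laguerreIntegrand {α : ℝ} (hα : -1 < α) {m : ℕ} (n : Fin m → ℕ) (c : ℕ) :
    IntegrableOn (laguerreIntegrand α c n) (Set.Ioi 0) ∧
      ∫ x in Set.Ioi 0, laguerreIntegrand α c n x =
        Real.Gamma (α + 1) * (-1) ^ (∑ j, n j) * boxCount (α + 1) (c + ∑ j, n j) (List.ofFn n) := by
  induction m generalizing c with
  | zero =>
    have hs : 0 < α + 1 + c := by linarith [c.cast_nonneg (α := ℝ)]
    have hf : laguerreIntegrand α c n = fun x => Real.exp (-x) * x ^ (α + 1 + c - 1) := by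
      funext x
      rw [laguerreIntegrand, Finset.univ_eq_empty, Finset.prod_empty, mul_one, mul_comm]
      ring_nf
    rw [hf, ← Real.Gamma_eq_integral hs, Gamma_add_nat (by linarith) c]
    simp [Real.GammaIntegral_convergent hs, boxCount]
  | succ m ih =>
    set coeff : ℕ → ℝ := fun k => (-1) ^ k * (n 0).choose k * ∏ t ∈ Finset.Ico k (n 0), (α + 1 + t)
    have hexp : Set.EqOn (laguerreIntegrand α c n) (fun x => ∑ k ∈ Finset.range (n 0 + 1),
        coeff k * laguerreIntegrand α (c + k) (Fin.tail n) x) (Set.Ioi 0) :=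
      fun x hx => laguerreIntegrand_succ α c n hx
    have hint (k : ℕ) : Integrable (fun x => coeff k * laguerreIntegrand α (c + k) (Fin.tail n) x)
        (volume.restrict (Set.Ioi 0)) :=
      (ih (Fin.tail n) (c + k)).1.const_mul (coeff k)
    refine ⟨IntegrableOn.congr_fun (integrable_finsetSum _ fun k _ => hint k) hexp.symm
      measurableSet_Ioi, ?_⟩
    rw [setIntegral_congr_fun measurableSet_Ioi hexp, integral_finsetSum _ fun k _ => hint k]
    simp only [integral_const_mul, (ih _ _).2]
    have hsum : ∑ j, n j = n 0 + ∑ j, Fin.tail n j := Fin.sum_univ_succ n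
    have hofFn : List.ofFn n = n 0 :: List.ofFn (Fin.tail n) := List.ofFn_succ
    rw [hsum, hofFn, ← add_assoc, Nat.add_right_comm c (n 0), boxCount_cons_add, Finset.mul_sum]
    refine Finset.sum_congr rfl fun k hk => ?_
    simp only [coeff]
    rw [neg_one_pow_eq_mul_neg_one_pow_sub (Nat.lt_succ_iff.1 (Finset.mem_range.1 hk)), pow_add,
      Nat.add_right_comm c k]
    ring

end Laguerre

section Bridge

variable {m : ℕ}

lemma psum_add_self (n : Fin m → ℕ) (j : Fin m) :
    psum n j + n j = ∑ t, if t ≤ j then n t else 0 := by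
  rw [psum, ← Fintype.sum_ite_eq' j n, ← Finset.sum_add_distrib]
  refine Fintype.sum_congr _ _ fun t => ?_
  rcases lt_trichotomy t j with h | rfl | h
  · simp [h, h.le, h.ne]
  · simp
  · simp [h.not_gt, h.not_ge, h.ne']

lemma psum_add_le_psum (n : Fin m → ℕ) {j j' : Fin m} (h : j < j') :
    psum n j + n j ≤ psum n j' := by
  rw [psum_add_self, psum]
  refine Finset.sum_le_sum fun t _ => ?_
  split_ifs with h1 h2
  · exact le_rfl
  · exact absurd (h1.trans_lt h) h2
  · exact Nat.zero_le _
  · exact le_rfl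

lemma psum_add_le_total (n : Fin m → ℕ) (j : Fin m) : psum n j + n j ≤ total n := by
  rw [psum_add_self, total]
  exact Finset.sum_le_sum fun t _ => by split_ifs <;> simp

lemma eq_of_inBox {n : Fin m → ℕ} {j j' : Fin m} {i : ℕ} (h : inBox n j i) (h' : inBox n j' i) :
    j = j' := by
  by_contra hne
  rcases lt_or_gt_of_ne hne with hlt | hlt
  · have := psum_add_le_psum n hlt
    unfold inBox at h h'
    omega
  · have := psum_add_le_psum n hlt
    unfold inBox at h h'
    omega

lemma card_filter_inBox (n : Fin m → ℕ) (j : Fin m) :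
    #(Finset.univ.filter fun i : Fin (total n) => inBox n j i) = n j := by
  have hle := psum_add_le_total n j
  have hmap : (Finset.univ.filter fun i : Fin (total n) => inBox n j i).map Fin.valEmbedding =
      Finset.Ico (psum n j) (psum n j + n j) := by
    ext k
    simp only [Finset.mem_map, Finset.mem_filter, Finset.mem_univ, true_and, Fin.valEmbedding_apply,
      Finset.mem_Ico]
    constructor
    · rintro ⟨i, hi, rfl⟩
      exact hi
    · intro hk
      exact ⟨⟨k, by omega⟩, hk, rfl⟩
  rw [← Finset.card_map, hmap, Nat.card_Ico, Nat.add_sub_cancel_left]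

/-- The boxes `S_1, …, S_m` as subsets of `Fin N`. -/
noncomputable def restrictedBoxes (n0 : ℕ) (n : Fin m → ℕ) :
    List (Finset (Fin (total (Fin.cons n0 n : Fin (m + 1) → ℕ)))) :=
  List.ofFn fun j : Fin m =>
    Finset.univ.filter fun i => inBox (Fin.cons n0 n : Fin (m + 1) → ℕ) j.succ i

lemma sum_freeBoxPerms {R : Type*} [CommRing R] (x : R) (n0 : ℕ) (n : Fin m → ℕ) :
    ∑ π ∈ freeBoxPerms n0 n, x ^ cyc π = boxCount x (n0 + ∑ j, n j) (List.ofFn n) := by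
  have hdisj : (restrictedBoxes n0 n).Pairwise Disjoint := by
    refine List.pairwise_ofFn.2 fun j j' hjj' => Finset.disjoint_left.2 fun i hi hi' => hjj'.ne ?_
    exact Fin.succ_injective _ (eq_of_inBox (Finset.mem_filter.1 hi).2 (Finset.mem_filter.1 hi').2)
  have hsizes : (restrictedBoxes n0 n).map Finset.card = List.ofFn n := by
    simp only [restrictedBoxes, List.map_ofFn]
    congr 1
    funext j
    simp only [Function.comp_apply, card_filter_inBox, Fin.cons_succ]
  have htotal : Fintype.card (Fin (total (Fin.cons n0 n : Fin (m + 1) → ℕ))) = n0 + ∑ j, n j := by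
    simp [total, Fin.sum_univ_succ]
  rw [← htotal, ← cycSum_avoiding_boxes x _ _ hdisj hsizes, cycSum]
  refine Finset.sum_congr ?_ fun _ _ => rfl
  ext π
  simp [freeBoxPerms, restrictedBoxes, InCommonBox, Fin.forall_fin_succ]

end Bridge

/-- the Laguerre integral with extra factor `x^{n_0}` counts
permutations with the `0`-th box unrestricted, weighted by `(α+1)^{cyc}`. -/
theorem laguerre_moment_linearization (α : ℝ) (hα : -1 < α) (n0 : ℕ) {m : ℕ}
    (n : Fin m → ℕ) :
    (-1 : ℝ) ^ (∑ j : Fin m, n j) / Real.Gamma (α + 1) *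
        ∫ x in Set.Ioi (0 : ℝ), x ^ ((n0 : ℝ) + α) * Real.exp (-x) *
          ∏ j : Fin m, (Nat.factorial (n j) : ℝ) * laguerre α (n j) x
      = ∑ π ∈ freeBoxPerms n0 n, (α + 1) ^ cyc π := by
  have hΓ : Real.Gamma (α + 1) ≠ 0 := (Real.Gamma_pos_of_pos (by linarith)).ne'
  have hsign : ((-1 : ℝ) ^ (∑ j, n j)) ^ 2 = 1 := by
    rw [← pow_mul, mul_comm, pow_mul, neg_one_sq, one_pow]
  change _ * ∫ x in Set.Ioi 0, laguerreIntegrand α n0 n x = _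
  rw [(integral_laguerreIntegrand hα n n0).2, sum_freeBoxPerms]
  field_simp
  rw [hsign, one_mul]

end Paper
end

section
/- For all nonnegative integers m, n, s: (−1)^{m+n} ∫_0^∞ x^s e^{-x}·m! L_m(x)·n! L_n(x) dx = m!·n!·s!·Σ_{j≥0} binom(m,j)·binom(s, n+j−m)·binom(s+m−j, m), where L_n = L_n^{(0)} is the simple Laguerre polynomial and binomial coefficients with out-of-range arguments are 0. -/
/-!
Expanding `m! L_m(x) = Σ_k (-1)^k C(m,k) (m!/k!) x^k` and integrating termwise against
`x^s e^{-x}` turns the moment into the double sum `Σ_{k,l} ± (m!/k!) C(m,k) (n!/l!) C(n,l) (s+k+l)!`.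
Both alternating sums are `N`-th forward differences of `x ↦ C(x, b)`, which equal `C(x, b - N)`:
the sum over `l` collapses to `(-1)^n n! (s+k)! C(s+k, n)`, and after expanding `C(s+k, n)` by
Vandermonde the sum over `k` collapses as well.
-/

open Finset MeasureTheory

theorem neg_one_pow_mul_neg_one_pow_sub {R : Type*} [Monoid R] [HasDistribNeg R] {i N : ℕ}
    (h : i ≤ N) : (-1 : R) ^ N * (-1) ^ (N - i) = (-1) ^ i := by
  obtain ⟨d, rfl⟩ := Nat.exists_eq_add_of_le h
  rw [Nat.add_sub_cancel_left, pow_add, mul_assoc, ← pow_add, Even.neg_one_pow ⟨d, rfl⟩, mul_one]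

theorem Finset.sum_range_eq_sum_range_of_eq_zero {M : Type*} [AddCommMonoid M] {f : ℕ → M}
    {m n : ℕ} (hm : ∀ j, m ≤ j → f j = 0) (hn : ∀ j, n ≤ j → f j = 0) :
    ∑ j ∈ range m, f j = ∑ j ∈ range n, f j := by
  rcases le_total m n with h | h
  · exact sum_subset (range_subset_range.2 h) fun j _ hj ↦ hm j (by simpa using hj)
  · exact (sum_subset (range_subset_range.2 h) fun j _ hj ↦ hn j (by simpa using hj)).symm

section

open Nat fwdDiff

theorem fwdDiff_iter_choose_eq (N b : ℕ) :
    (Δ_[1])^[N] (fun x ↦ x.choose b : ℕ → ℤ) = fun x ↦ if N ≤ b then x.choose (b - N) else 0 := by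
  by_cases h : N ≤ b
  · obtain ⟨j, rfl⟩ := Nat.exists_eq_add_of_le h
    simp [fwdDiff_iter_choose]
  · obtain ⟨k, rfl⟩ := Nat.exists_eq_add_of_lt (not_le.1 h)
    have hb : (Δ_[1])^[b] (fun x ↦ x.choose b : ℕ → ℤ) = fun _ ↦ 1 := by
      simpa using fwdDiff_iter_choose 0 b
    simp only [h, if_false]
    rw [add_assoc, add_comm, Function.iterate_add_apply, hb, Function.iterate_succ_apply,
      fwdDiff_const]
    exact Function.iterate_fixed (fwdDiff_const 1 (0 : ℤ)) k

theorem Nat.sum_neg_one_pow_mul_choose_mul_add_choose (N b c : ℕ) :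
    ∑ i ∈ range (N + 1), (-1 : ℤ) ^ i * N.choose i * (b + c + i).choose b
      = (-1) ^ N * (b + c).choose (c + N) := by
  have h := congrFun (fwdDiff_iter_choose_eq N b) (b + c)
  have hrhs : (if N ≤ b then ((b + c).choose (b - N) : ℤ) else 0) = (b + c).choose (c + N) := by
    split_ifs with hN
    · rw [choose_symm_of_eq_add (by omega : b + c = b - N + (c + N))]
    · rw [choose_eq_zero_of_lt (by omega), Nat.cast_zero]
  rw [fwdDiff_iter_eq_sum_shift, hrhs] at h
  rw [← h, mul_sum]
  refine sum_congr rfl fun i hi ↦ ?_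
  rw [smul_eq_mul, smul_eq_mul, mul_one, ← mul_assoc, ← mul_assoc,
    neg_one_pow_mul_neg_one_pow_sub (mem_range_succ_iff.1 hi)]

end

namespace Paper

open Nat

theorem genBinom_zero {k n : ℕ} (h : k ≤ n) : genBinom 0 n k = n.choose k := by
  have hprod : k ! * ∏ t ∈ Ico k n, (t + 1) = n ! := by
    rw [← prod_range_add_one_eq_factorial, ← prod_range_add_one_eq_factorial,
      prod_range_mul_prod_Ico _ h]
  have hprod' : (k ! : ℝ) * ∏ t ∈ Ico k n, ((0 : ℝ) + t + 1) = n ! := by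
    simp only [zero_add]
    exact_mod_cast hprod
  have hfac : (n.choose k : ℝ) * k ! * (n - k)! = n ! := by
    exact_mod_cast choose_mul_factorial_mul_factorial h
  rw [genBinom, div_eq_iff (by positivity)]
  refine mul_left_cancel₀ (by positivity : (k ! : ℝ) ≠ 0) ?_
  linear_combination hprod' - hfac

-- `laguerreCoeff n k = C(n,k) · n!/k!`
def laguerreCoeff (n k : ℕ) : ℕ := n.choose k ^ 2 * (n - k)!

theorem factorial_mul_laguerre_zero (n : ℕ) (x : ℝ) :
    n ! * laguerre 0 n x = ∑ k ∈ range (n + 1), (-1) ^ k * (laguerreCoeff n k : ℝ) * x ^ k := by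
  rw [laguerre, mul_sum]
  refine sum_congr rfl fun k hk ↦ ?_
  have hk : k ≤ n := mem_range_succ_iff.1 hk
  have h : (n.choose k : ℝ) * k ! * (n - k)! = n ! := by
    exact_mod_cast choose_mul_factorial_mul_factorial hk
  rw [genBinom_zero hk, laguerreCoeff, ← h]
  push_cast
  field_simp

theorem integrableOn_pow_mul_exp_neg (p : ℕ) :
    IntegrableOn (fun x : ℝ ↦ x ^ p * Real.exp (-x)) (Set.Ioi 0) := by
  refine (Real.GammaIntegral_convergent (s := p + 1) (by positivity)).congr_fun (fun x _ ↦ ?_)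
    measurableSet_Ioi
  simp [mul_comm]

theorem integral_pow_mul_exp_neg (p : ℕ) :
    ∫ x in Set.Ioi (0 : ℝ), x ^ p * Real.exp (-x) = p ! := by
  rw [← Real.Gamma_nat_eq_factorial, Real.Gamma_eq_integral (by positivity)]
  refine setIntegral_congr_fun measurableSet_Ioi fun x _ ↦ ?_
  simp [mul_comm]

theorem integral_pow_mul_exp_neg_mul_sum_mul_sum (s M N : ℕ) (p q : ℕ → ℝ) :
    ∫ x in Set.Ioi (0 : ℝ), x ^ s * Real.exp (-x) * (∑ k ∈ range M, p k * x ^ k) *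
        (∑ l ∈ range N, q l * x ^ l)
      = ∑ k ∈ range M, ∑ l ∈ range N, p k * q l * (s + k + l)! := by
  have hexpand : ∀ x : ℝ, x ^ s * Real.exp (-x) * (∑ k ∈ range M, p k * x ^ k) *
      (∑ l ∈ range N, q l * x ^ l)
        = ∑ k ∈ range M, ∑ l ∈ range N, p k * q l * (x ^ (s + k + l) * Real.exp (-x)) := by
    intro x
    simp_rw [mul_assoc, sum_mul_sum, mul_sum]
    refine sum_congr rfl fun k _ ↦ sum_congr rfl fun l _ ↦ ?_
    ring
  have hint : ∀ k l, Integrable (fun x ↦ p k * q l * (x ^ (s + k + l) * Real.exp (-x)))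
      (volume.restrict (Set.Ioi 0)) :=
    fun k l ↦ (integrableOn_pow_mul_exp_neg _).const_mul _
  simp_rw [hexpand]
  rw [integral_finsetSum _ fun k _ ↦ integrable_finsetSum _ fun l _ ↦ hint k l]
  refine sum_congr rfl fun k _ ↦ ?_
  rw [integral_finsetSum _ fun l _ ↦ hint k l]
  refine sum_congr rfl fun l _ ↦ ?_
  rw [integral_const_mul, integral_pow_mul_exp_neg]

theorem laguerreCoeff_mul_factorial_add {n l : ℕ} (h : l ≤ n) (T : ℕ) :
    laguerreCoeff n l * (T + l)! = n.choose l * n ! * T ! * (T + l).choose T := by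
  refine Nat.eq_of_mul_eq_mul_right (factorial_pos l) ?_
  calc laguerreCoeff n l * (T + l)! * l !
      = n.choose l * (n.choose l * l ! * (n - l)!) * (T + l)! := by
        rw [laguerreCoeff]; ring
    _ = n.choose l * n ! * T ! * (T + l).choose T * l ! := by
        rw [choose_mul_factorial_mul_factorial h, ← add_choose_mul_factorial_mul_factorial T l,
          choose_symm_add]
        ring

theorem sum_neg_one_pow_mul_laguerreCoeff_mul_factorial (n T : ℕ) :
    ∑ l ∈ range (n + 1), (-1 : ℤ) ^ l * laguerreCoeff n l * (T + l)!
      = (-1) ^ n * n ! * T ! * T.choose n := by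
  have h := sum_neg_one_pow_mul_choose_mul_add_choose n T 0
  simp only [add_zero, zero_add] at h
  calc ∑ l ∈ range (n + 1), (-1 : ℤ) ^ l * laguerreCoeff n l * (T + l)!
      = n ! * T ! * ∑ l ∈ range (n + 1), (-1 : ℤ) ^ l * n.choose l * (T + l).choose T := by
        rw [mul_sum]
        refine sum_congr rfl fun l hl ↦ ?_
        rw [mul_assoc, ← Nat.cast_mul, laguerreCoeff_mul_factorial_add (mem_range_succ_iff.1 hl)]
        push_cast; ring
    _ = (-1) ^ n * n ! * T ! * T.choose n := by rw [h]; ring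

theorem sum_neg_one_pow_mul_choose_mul_choose_mul_add_choose {j m : ℕ} (hj : j ≤ m) (s : ℕ) :
    ∑ k ∈ range (m + 1), (-1 : ℤ) ^ k * m.choose k * k.choose j * (s + k).choose s
      = (-1) ^ m * m.choose j * (s + j).choose m := by
  have hshift : m + 1 = j + (m - j + 1) := by omega
  have hlow : ∑ k ∈ range j, (-1 : ℤ) ^ k * m.choose k * k.choose j * (s + k).choose s = 0 :=
    sum_eq_zero fun k hk ↦ by rw [choose_eq_zero_of_lt (mem_range.1 hk)]; simp
  have h := Nat.sum_neg_one_pow_mul_choose_mul_add_choose (m - j) s j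
  rw [show j + (m - j) = m by omega] at h
  rw [hshift, sum_range_add, hlow, zero_add]
  calc ∑ i ∈ range (m - j + 1), (-1 : ℤ) ^ (j + i) * m.choose (j + i) * (j + i).choose j
          * (s + (j + i)).choose s
      = (-1) ^ j * m.choose j * ∑ i ∈ range (m - j + 1),
          (-1 : ℤ) ^ i * (m - j).choose i * (s + j + i).choose s := by
        rw [mul_sum]
        refine sum_congr rfl fun i _ ↦ ?_
        rw [mul_assoc _ (m.choose (j + i) : ℤ), ← Nat.cast_mul, choose_mul (le_add_right j i),
          Nat.add_sub_cancel_left, ← add_assoc]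
        push_cast; ring
    _ = (-1) ^ m * m.choose j * (s + j).choose m := by
        have hsign : (-1 : ℤ) ^ j * (-1) ^ (m - j) = (-1) ^ m := by
          rw [← pow_add, Nat.add_sub_cancel' hj]
        rw [h, ← hsign]; ring

theorem add_choose_eq_sum_range {k m : ℕ} (hk : k ≤ m) (s n : ℕ) :
    (s + k).choose n = ∑ j ∈ range (m + 1), k.choose j * if j ≤ n then s.choose (n - j) else 0 := by
  rw [add_comm, add_choose_eq, sum_antidiagonal_eq_sum_range_succ (fun i l ↦ k.choose i * s.choose l)]
  refine (sum_congr rfl fun j hj ↦ ?_).trans (sum_range_eq_sum_range_of_eq_zero ?_ ?_)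
  · rw [if_pos (mem_range_succ_iff.1 hj)]
  · intro j hj
    rw [if_neg (by omega), mul_zero]
  · intro j hj
    rw [choose_eq_zero_of_lt (by omega), zero_mul]

-- The sum of `laguerre_pair_moment`, reindexed by `j ↦ m - j`.
def pairMomentSum (m n s : ℕ) : ℕ :=
  ∑ j ∈ range (m + 1), m.choose j * (if j ≤ n then s.choose (n - j) else 0) * (s + j).choose m

theorem sum_neg_one_pow_mul_choose_mul_add_choose_mul_add_choose (m n s : ℕ) :
    ∑ k ∈ range (m + 1), (-1 : ℤ) ^ k * m.choose k * (s + k).choose s * (s + k).choose n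
      = (-1) ^ m * pairMomentSum m n s := by
  calc ∑ k ∈ range (m + 1), (-1 : ℤ) ^ k * m.choose k * (s + k).choose s * (s + k).choose n
      = ∑ k ∈ range (m + 1), ∑ j ∈ range (m + 1), (if j ≤ n then (s.choose (n - j) : ℤ) else 0) *
          ((-1 : ℤ) ^ k * m.choose k * k.choose j * (s + k).choose s) := by
        refine sum_congr rfl fun k hk ↦ ?_
        rw [add_choose_eq_sum_range (mem_range_succ_iff.1 hk) s n, Nat.cast_sum, mul_sum]
        refine sum_congr rfl fun j _ ↦ ?_
        push_cast; ring
    _ = ∑ j ∈ range (m + 1), (if j ≤ n then (s.choose (n - j) : ℤ) else 0) *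
          ∑ k ∈ range (m + 1), (-1 : ℤ) ^ k * m.choose k * k.choose j * (s + k).choose s := by
        simp_rw [mul_sum]
        exact sum_comm
    _ = (-1) ^ m * pairMomentSum m n s := by
        rw [pairMomentSum, Nat.cast_sum, mul_sum]
        refine sum_congr rfl fun j hj ↦ ?_
        rw [sum_neg_one_pow_mul_choose_mul_choose_mul_add_choose (mem_range_succ_iff.1 hj)]
        push_cast; ring

theorem sum_sum_laguerreCoeff_mul_factorial (m n s : ℕ) :
    ∑ k ∈ range (m + 1), ∑ l ∈ range (n + 1),
        (-1 : ℤ) ^ k * laguerreCoeff m k * ((-1) ^ l * laguerreCoeff n l) * (s + k + l)!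
      = (-1) ^ (m + n) * m ! * n ! * s ! * pairMomentSum m n s := by
  calc ∑ k ∈ range (m + 1), ∑ l ∈ range (n + 1),
        (-1 : ℤ) ^ k * laguerreCoeff m k * ((-1) ^ l * laguerreCoeff n l) * (s + k + l)!
      = ∑ k ∈ range (m + 1), (-1 : ℤ) ^ k * laguerreCoeff m k *
          ∑ l ∈ range (n + 1), (-1 : ℤ) ^ l * laguerreCoeff n l * (s + k + l)! := by
        simp_rw [mul_sum, mul_assoc]
    _ = (-1) ^ n * n ! * m ! * s ! * ∑ k ∈ range (m + 1),
          (-1 : ℤ) ^ k * m.choose k * (s + k).choose s * (s + k).choose n := by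
        rw [mul_sum]
        refine sum_congr rfl fun k hk ↦ ?_
        have h : (laguerreCoeff m k : ℤ) * (s + k)! = m.choose k * m ! * s ! * (s + k).choose s := by
          exact_mod_cast laguerreCoeff_mul_factorial_add (mem_range_succ_iff.1 hk) s
        rw [sum_neg_one_pow_mul_laguerreCoeff_mul_factorial]
        linear_combination (-1 : ℤ) ^ k * (-1) ^ n * n ! * (s + k).choose n * h
    _ = (-1) ^ (m + n) * m ! * n ! * s ! * pairMomentSum m n s := by
        rw [sum_neg_one_pow_mul_choose_mul_add_choose_mul_add_choose]; ring

theorem tsum_choose_mul_choose_mul_choose_eq_pairMomentSum (m n s : ℕ) :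
    ∑' j : ℕ, (m.choose j : ℝ) * (if m ≤ n + j then (s.choose (n + j - m) : ℝ) else 0) *
        ((s + m - j).choose m : ℝ)
      = pairMomentSum m n s := by
  rw [tsum_eq_sum (s := range (m + 1)) fun j hj ↦ by
      rw [choose_eq_zero_of_lt (by simpa using hj), Nat.cast_zero, zero_mul, zero_mul],
    ← sum_range_reflect, pairMomentSum, Nat.cast_sum]
  refine sum_congr rfl fun j hj ↦ ?_
  have hj : j ≤ m := mem_range_succ_iff.1 hj
  rw [add_tsub_cancel_right, choose_symm hj, show s + m - (m - j) = s + j by omega]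
  split_ifs with h₁ h₂ h₂
  · rw [show n + (m - j) - m = n - j by omega]; push_cast; ring
  · omega
  · omega
  · simp

/-- an explicit evaluation of
`(-1)^{m+n} ∫_0^∞ x^s e^{-x} m!L_m(x) n!L_n(x) dx` (Corollary on `A⁽⁰⁾(m,n,s)`).
Out-of-range binomial coefficients are `0`. -/
theorem laguerre_pair_moment (m n s : ℕ) :
    (-1 : ℝ) ^ (m + n) *
        ∫ x in Set.Ioi (0 : ℝ), x ^ s * Real.exp (-x) *
          ((Nat.factorial m : ℝ) * laguerre 0 m x) *
            ((Nat.factorial n : ℝ) * laguerre 0 n x)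
      = (Nat.factorial m : ℝ) * (Nat.factorial n : ℝ) * (Nat.factorial s : ℝ) *
          ∑' j : ℕ, (Nat.choose m j : ℝ) *
            (if m ≤ n + j then (Nat.choose s (n + j - m) : ℝ) else 0) *
              (Nat.choose (s + m - j) m : ℝ) := by
  have hsum : ∑ k ∈ range (m + 1), ∑ l ∈ range (n + 1),
        (-1 : ℝ) ^ k * laguerreCoeff m k * ((-1) ^ l * laguerreCoeff n l) * (s + k + l)!
      = (-1) ^ (m + n) * m ! * n ! * s ! * pairMomentSum m n s := by
    exact_mod_cast sum_sum_laguerreCoeff_mul_factorial m n s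
  simp_rw [factorial_mul_laguerre_zero]
  rw [integral_pow_mul_exp_neg_mul_sum_mul_sum, hsum,
    tsum_choose_mul_choose_mul_choose_eq_pairMomentSum]
  simp only [mul_assoc]
  rw [← mul_assoc, ← pow_add, Even.neg_one_pow ⟨_, rfl⟩, one_mul]

end Paper
end
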